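/- arXiv:2202.11442 — 2 statements merged into one kernel-verified Lean document; each statement's English description precedes it below -/
import Mathlib

section
/- Let M_q(n) be the standard quantized matrix algebra over K with n ≥ 2 and q ≠ 0. Then the family of ordered monomials {z^α : α ∈ ℕ^{I(n)}} is a K-basis of M_q(n) (the PBW basis); that is, the ordered monomials are K-linearly independent and span M_q(n) as a K-vector space. -/
/-! Common setup: the standard quantized matrix algebra `M_q(n)` of
Faddeev–Reshetikhin–Takhtajan, defined as the quotient of the free
`K`-algebra on the `n²` generators `z_{ij}` by the two-sided ideal
generated by the relations R1–R4. -/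

/-- The generator `z_{ij}` of the free algebra on `Fin n × Fin n`. -/
noncomputable def freeGen (K : Type*) [Field K] (n : ℕ) (i j : Fin n) :
    FreeAlgebra K (Fin n × Fin n) :=
  FreeAlgebra.ι K (i, j)

/-- The defining relations R1–R4 of the standard quantized matrix algebra. -/
inductive QMRel (K : Type*) [Field K] (q : K) (n : ℕ) :
    FreeAlgebra K (Fin n × Fin n) → FreeAlgebra K (Fin n × Fin n) → Prop
  | r1 (i j k : Fin n) (h : j < k) :
      QMRel K q n (freeGen K n i j * freeGen K n i k)
        (q • (freeGen K n i k * freeGen K n i j))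
  | r2 (i j k : Fin n) (h : i < k) :
      QMRel K q n (freeGen K n i j * freeGen K n k j)
        (q • (freeGen K n k j * freeGen K n i j))
  | r3 (i j s t : Fin n) (h1 : i < s) (h2 : t < j) :
      QMRel K q n (freeGen K n i j * freeGen K n s t)
        (freeGen K n s t * freeGen K n i j)
  | r4 (i j s t : Fin n) (h1 : i < s) (h2 : j < t) :
      QMRel K q n (freeGen K n i j * freeGen K n s t)
        (freeGen K n s t * freeGen K n i j +
          (q - q⁻¹) • (freeGen K n i t * freeGen K n s j))

/-- The standard quantized matrix algebra `M_q(n)`: the quotient of the free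
algebra by the two-sided ideal generated by the relations R1–R4. -/
abbrev QuantumMatrix (K : Type*) [Field K] (q : K) (n : ℕ) :=
  RingQuot (QMRel K q n)

/-- The generator `z_{ij}` of `M_q(n)`. -/
noncomputable def Zgen (K : Type*) [Field K] (q : K) (n : ℕ) (i j : Fin n) :
    QuantumMatrix K q n :=
  RingQuot.mkAlgHom K (QMRel K q n) (freeGen K n i j)

/-- The order on the index set `I(n)`: `(k,l) < (i,j)` iff `k < i`, or
`k = i` and `l < j`. -/
def idxLt {n : ℕ} (p r : Fin n × Fin n) : Prop :=
  p.1 < r.1 ∨ (p.1 = r.1 ∧ p.2 < r.2)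

/-- The ordered monomial `z^α`: the product of the `z_{ij}^{α_{ij}}` taken
in decreasing order of the indices `(i,j)`, i.e.
`z_{nn}^{α_{nn}} z_{n,n-1}^{α_{n,n-1}} ⋯ z_{n1}^{α_{n1}} ⋯ z_{11}^{α_{11}}`. -/
noncomputable def zmon (K : Type*) [Field K] (q : K) {n : ℕ}
    (α : Fin n × Fin n → ℕ) : QuantumMatrix K q n :=
  ((List.finRange n).reverse.flatMap fun i =>
    (List.finRange n).reverse.map fun j => Zgen K q n i j ^ α (i, j)).prod

/-- The lexicographic order on exponent vectors: `α ≺ β` iff `α` is smaller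
than `β` at the largest index (w.r.t. the order on `I(n)`) at which they
differ. -/
def expLt {n : ℕ} (α β : Fin n × Fin n → ℕ) : Prop :=
  ∃ p : Fin n × Fin n, α p < β p ∧ ∀ r : Fin n × Fin n, idxLt p r → α r = β r

/-- The indicator exponent vector `ε_{ij}`. -/
def eps {n : ℕ} (i j : Fin n) : Fin n × Fin n → ℕ :=
  fun p => if p = (i, j) then 1 else 0

/-- `γ` is the leading exponent of `f` with respect to the order `lt`,
relative to the PBW basis `b` indexed by exponent vectors:
`γ` occurs with nonzero coefficient in the expansion of `f` and every other
exponent occurring in `f` is `lt`-smaller than `γ`. -/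
def IsLeadExpWrt {K : Type*} [Field K] {q : K} {n : ℕ}
    (lt : (Fin n × Fin n → ℕ) → (Fin n × Fin n → ℕ) → Prop)
    (b : Module.Basis (Fin n × Fin n → ℕ) K (QuantumMatrix K q n))
    (f : QuantumMatrix K q n) (γ : Fin n × Fin n → ℕ) : Prop :=
  b.repr f γ ≠ 0 ∧ ∀ δ, b.repr f δ ≠ 0 → δ = γ ∨ lt δ γ

/-- `γ` is the leading exponent of `f` w.r.t. the lexicographic order. -/
def IsLeadExp {K : Type*} [Field K] {q : K} {n : ℕ}
    (b : Module.Basis (Fin n × Fin n → ℕ) K (QuantumMatrix K q n))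
    (f : QuantumMatrix K q n) (γ : Fin n × Fin n → ℕ) : Prop :=
  IsLeadExpWrt expLt b f γ


/-!
Order the generators by `idxLt`. For `x < y` each of R1–R4 has the form
`z_x z_y = c z_y z_x + d z_{x.1, y.2} z_{y.1, x.2}`, and the ordered monomials are the normal
forms of the rewriting system these equations define. On the space with basis the exponent
vectors, let `z_x` act by straightening `z_x z^α`: if no letter of `α` exceeds `x` the word is
already ordered, and otherwise `z_x z_m` is rewritten, `m` being the largest letter of `α`. Since
the new letters `(x.1, m.2)` and `(m.1, x.2)` exceed `x`, this is a recursion downwards in `x` and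
then on `α`.

These operators satisfy R1–R4: by induction on the weight `∑ α_p 2^(key p)` of `α`, this comes
down to the resolution of the overlaps `z_p z_r z_m` with `p < r < m`. Hence `M_q(n)` acts on the
space, with `z^α · e_0 = e_α`, so the ordered monomials are independent. They also span, because
`e_α ↦ z^α` intertwines the straightening with left multiplication.
-/

noncomputable section

namespace QuantumMatrix

variable {n : ℕ}

def key (p : Fin n × Fin n) : ℕ := finProdFinEquiv p

lemma key_lt (p : Fin n × Fin n) : key p < n * n := (finProdFinEquiv p).isLt

lemma idxLt_iff_key_lt {p r : Fin n × Fin n} : idxLt p r ↔ key p < key r := by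
  obtain ⟨⟨a, ha⟩, ⟨b, hb⟩⟩ := p
  obtain ⟨⟨c, hc⟩, ⟨d, hd⟩⟩ := r
  simp only [idxLt, key, finProdFinEquiv_apply_val, Fin.mk_lt_mk, Fin.mk.injEq]
  constructor
  · rintro (h | ⟨rfl, h⟩)
    · nlinarith [Nat.mul_le_mul_left n h]
    · omega
  · intro h
    rcases lt_trichotomy a c with h' | rfl | h'
    · exact Or.inl h'
    · exact Or.inr ⟨rfl, by omega⟩
    · nlinarith [Nat.mul_le_mul_left n h']

lemma idxLt_irrefl (p : Fin n × Fin n) : ¬ idxLt p p := by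
  simp [idxLt]

lemma idxLt_trichotomy (p r : Fin n × Fin n) : idxLt p r ∨ p = r ∨ idxLt r p := by
  obtain ⟨a, b⟩ := p
  obtain ⟨c, d⟩ := r
  simp only [idxLt, Prod.mk.injEq]
  omega

lemma sub_key_lt_sub_key {x y : Fin n × Fin n} (h : idxLt x y) :
    n * n - key y < n * n - key x := by
  have := key_lt y
  have := idxLt_iff_key_lt.1 h
  omega

/-- Exponential in the position, so that the cross term `z_{i,l} z_{k,j}` of R4 weighs less
than `z_{k,l}` alone (`weight_add_weight_lt`). -/
def weight (p : Fin n × Fin n) : ℕ := 2 ^ key p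

lemma weight_pos (p : Fin n × Fin n) : 0 < weight p := Nat.two_pow_pos _

lemma weight_lt_weight {p r : Fin n × Fin n} (h : idxLt p r) : weight p < weight r :=
  Nat.pow_lt_pow_right one_lt_two (idxLt_iff_key_lt.1 h)

lemma weight_add_weight_lt {a b c : Fin n × Fin n} (hab : idxLt a b) (hbc : idxLt b c) :
    weight a + weight b < weight c := by
  have h1 := weight_lt_weight hab
  have h2 : 2 ^ (key b + 1) ≤ weight c :=
    Nat.pow_le_pow_right two_pos (idxLt_iff_key_lt.1 hbc)
  rw [pow_succ] at h2
  unfold weight at *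
  omega

def totalWeight (α : Fin n × Fin n → ℕ) : ℕ := ∑ p, α p * weight p

lemma totalWeight_add_single (α : Fin n × Fin n → ℕ) (m : Fin n × Fin n) :
    totalWeight (α + Pi.single m 1) = totalWeight α + weight m := by
  simp [totalWeight, add_mul, Finset.sum_add_distrib, Pi.single_apply]

lemma sub_single_add_single {α : Fin n × Fin n → ℕ} {m : Fin n × Fin n} (h : α m ≠ 0) :
    α - Pi.single m 1 + Pi.single m 1 = α := by
  funext r
  by_cases hr : r = m
  · subst hr
    simp only [Pi.add_apply, Pi.sub_apply, Pi.single_eq_same]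
    omega
  · simp [hr]

lemma totalWeight_sub_single_lt {α : Fin n × Fin n → ℕ} {m : Fin n × Fin n} (h : α m ≠ 0) :
    totalWeight (α - Pi.single m 1) < totalWeight α := by
  conv_rhs => rw [← sub_single_add_single h]
  rw [totalWeight_add_single]
  exact Nat.lt_add_of_pos_right (weight_pos m)

def LettersLE (x : Fin n × Fin n) (α : Fin n × Fin n → ℕ) : Prop :=
  ∀ r, α r ≠ 0 → ¬ idxLt x r

lemma LettersLE.add_single {x m : Fin n × Fin n} {α : Fin n × Fin n → ℕ} (h : LettersLE x α)
    (hm : ¬ idxLt x m) : LettersLE x (α + Pi.single m 1) := by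
  intro r hr
  by_cases hrm : r = m
  · exact hrm ▸ hm
  · exact h r (by simpa [Pi.single_apply, hrm] using hr)

lemma LettersLE.sub_single {x m : Fin n × Fin n} {α : Fin n × Fin n → ℕ} (h : LettersLE x α) :
    LettersLE x (α - Pi.single m 1) :=
  fun r hr => h r fun h0 => hr (by simp [h0])

lemma LettersLE.mono {x y : Fin n × Fin n} {α : Fin n × Fin n → ℕ} (h : LettersLE x α)
    (hxy : ¬ idxLt y x) : LettersLE y α := by
  intro r hr hyr
  rw [idxLt_iff_key_lt] at hxy hyr
  exact h r hr (idxLt_iff_key_lt.2 (by omega))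

lemma idxLt_of_not_lettersLE {x m : Fin n × Fin n} {α : Fin n × Fin n → ℕ} (hm : LettersLE m α)
    (hx : ¬ LettersLE x (α + Pi.single m 1)) : idxLt x m := by
  by_contra h
  exact hx ((hm.mono h).add_single h)

lemma ne_zero_of_not_lettersLE {x : Fin n × Fin n} {α : Fin n × Fin n → ℕ}
    (h : ¬ LettersLE x α) : α ≠ 0 := by
  rintro rfl
  exact h fun r hr => absurd rfl hr

lemma exists_topLetter {α : Fin n × Fin n → ℕ} (h : α ≠ 0) : ∃ m, α m ≠ 0 ∧ LettersLE m α := by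
  obtain ⟨r, hr⟩ := Function.ne_iff.1 h
  obtain ⟨m, hm, hmax⟩ := Finset.exists_max_image (Finset.univ.filter (α · ≠ 0)) key
    ⟨r, by simpa using hr⟩
  refine ⟨m, (Finset.mem_filter.1 hm).2, fun r hr hlt => ?_⟩
  have := hmax r (by simpa using hr)
  rw [idxLt_iff_key_lt] at hlt
  omega

def topLetter (α : Fin n × Fin n → ℕ) (h : α ≠ 0) : Fin n × Fin n :=
  (exists_topLetter h).choose

lemma topLetter_spec {α : Fin n × Fin n → ℕ} (h : α ≠ 0) :
    α (topLetter α h) ≠ 0 ∧ LettersLE (topLetter α h) α :=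
  (exists_topLetter h).choose_spec

lemma idxLt_topLetter {x : Fin n × Fin n} {α : Fin n × Fin n → ℕ} (h : ¬ LettersLE x α) :
    idxLt x (topLetter α (ne_zero_of_not_lettersLE h)) := by
  obtain ⟨hm, hle⟩ := topLetter_spec (ne_zero_of_not_lettersLE h)
  rw [← sub_single_add_single hm] at h
  exact idxLt_of_not_lettersLE hle.sub_single h

lemma topLetter_add_single {α : Fin n × Fin n → ℕ} {m : Fin n × Fin n} (hm : LettersLE m α)
    (h : α + Pi.single m 1 ≠ 0) : topLetter (α + Pi.single m 1) h = m := by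
  obtain ⟨h0, hle⟩ := topLetter_spec h
  rcases idxLt_trichotomy (topLetter _ h) m with hlt | heq | hlt
  · exact absurd hlt (hle m (by simp))
  · exact heq
  · exact absurd hlt (hm.add_single (idxLt_irrefl m) _ h0)

theorem exponent_induction {P : (Fin n × Fin n → ℕ) → Prop} (zero : P 0)
    (add_single : ∀ m α, LettersLE m α → P α → P (α + Pi.single m 1))
    (α : Fin n × Fin n → ℕ) : P α := by
  induction hN : totalWeight α using Nat.strong_induction_on generalizing α with
  | _ N ih =>
  by_cases h : α = 0
  · exact h ▸ zero
  obtain ⟨hm, hle⟩ := topLetter_spec h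
  rw [← sub_single_add_single hm]
  exact add_single _ _ hle.sub_single (ih _ (hN ▸ totalWeight_sub_single_lt hm) _ rfl)

variable {K : Type*} [Field K]

/-- For `idxLt x y` each of the relations R1–R4 reads
`z_x z_y = swapCoeff q x y • z_y z_x + crossCoeff q x y • z_{x.1, y.2} z_{y.1, x.2}`. -/
def swapCoeff (q : K) (x y : Fin n × Fin n) : K := if x.1 = y.1 ∨ x.2 = y.2 then q else 1

def crossCoeff (q : K) (x y : Fin n × Fin n) : K :=
  if x.1 < y.1 ∧ x.2 < y.2 then q - q⁻¹ else 0

section Relations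

variable {V : Type*} [AddCommGroup V] [Module K V]

def StraightenRel (q : K) (T : Fin n × Fin n → V →ₗ[K] V) (x y : Fin n × Fin n) (v : V) :
    Prop :=
  T x (T y v) = swapCoeff q x y • T y (T x v) + crossCoeff q x y • T (x.1, y.2) (T (y.1, x.2) v)

structure RelationsHoldAt (q : K) (T : Fin n × Fin n → V →ₗ[K] V) (v : V) : Prop where
  r1 : ∀ i j k, j < k → T (i, j) (T (i, k) v) = q • T (i, k) (T (i, j) v)
  r2 : ∀ i j k, i < k → T (i, j) (T (k, j) v) = q • T (k, j) (T (i, j) v)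
  r3 : ∀ i j s t, i < s → t < j → T (i, j) (T (s, t) v) = T (s, t) (T (i, j) v)
  r4 : ∀ i j s t, i < s → j < t →
    T (i, j) (T (s, t) v) = T (s, t) (T (i, j) v) + (q - q⁻¹) • T (i, t) (T (s, j) v)

variable {q : K} {T : Fin n × Fin n → V →ₗ[K] V}

theorem relationsHoldAt_iff {v : V} :
    RelationsHoldAt q T v ↔ ∀ x y, idxLt x y → StraightenRel q T x y v := by
  constructor
  · rintro ⟨r1, r2, r3, r4⟩ ⟨a, b⟩ ⟨c, d⟩ (h | ⟨rfl, h⟩)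
    · rcases lt_trichotomy b d with h' | rfl | h'
      · simpa [StraightenRel, swapCoeff, crossCoeff, h.ne, h'.ne, h, h'] using r4 a b c d h h'
      · simpa [StraightenRel, swapCoeff, crossCoeff, h.ne] using r2 a b c h
      · simpa [StraightenRel, swapCoeff, crossCoeff, h.ne, h'.ne', h'.not_gt] using
          r3 a b c d h h'
    · simpa [StraightenRel, swapCoeff, crossCoeff] using r1 a b d h
  · intro h
    refine ⟨fun i j k hjk => ?_, fun i j k hik => ?_, fun i j s t his htj => ?_,
      fun i j s t his hjt => ?_⟩
    · simpa [StraightenRel, swapCoeff, crossCoeff] using h (i, j) (i, k) (Or.inr ⟨rfl, hjk⟩)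
    · simpa [StraightenRel, swapCoeff, crossCoeff, hik.ne] using h (i, j) (k, j) (Or.inl hik)
    · simpa [StraightenRel, swapCoeff, crossCoeff, his.ne, htj.ne', htj.not_gt] using
        h (i, j) (s, t) (Or.inl his)
    · simpa [StraightenRel, swapCoeff, crossCoeff, his.ne, hjt.ne, his, hjt] using
        h (i, j) (s, t) (Or.inl his)

theorem StraightenRel.of_mem_span {x y : Fin n × Fin n} {s : Set V}
    (h : ∀ v ∈ s, StraightenRel q T x y v) {v : V} (hv : v ∈ Submodule.span K s) :
    StraightenRel q T x y v :=
  LinearMap.eqOn_span (f := T x ∘ₗ T y)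
    (g := swapCoeff q x y • T y ∘ₗ T x + crossCoeff q x y • T (x.1, y.2) ∘ₗ T (y.1, x.2))
    h hv

/-- The overlap `z_p z_r z_m` resolves: for each relative position of the rows and of the
columns of `p`, `r`, `m`, both sides have the same normal form, computed with the relations at
`v` and at the `T z v` with `z < m`. -/
theorem StraightenRel.of_overlap (hq : q ≠ 0) {m : Fin n × Fin n} {v : V}
    (hv : RelationsHoldAt q T v) (hTv : ∀ z, idxLt z m → RelationsHoldAt q T (T z v))
    {p r : Fin n × Fin n} (hpr : idxLt p r) (hrm : idxLt r m) :
    StraightenRel q T p r (T m v) := by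
  obtain ⟨a, b⟩ := p
  obtain ⟨c, d⟩ := r
  obtain ⟨e, f⟩ := m
  have r1 := fun s t (h : s < e ∨ (s = e ∧ t < f)) => (hTv (s, t) h).r1
  have r2 := fun s t (h : s < e ∨ (s = e ∧ t < f)) => (hTv (s, t) h).r2
  have r4 := fun s t (h : s < e ∨ (s = e ∧ t < f)) => (hTv (s, t) h).r4
  -- `1 •` keeps `simp` from using R3 as a permutation lemma, which it would apply only one way
  have r3 : ∀ s' t', s' < e ∨ (s' = e ∧ t' < f) → ∀ i j s t, i < s → t < j →
      T (i, j) (T (s, t) (T (s', t') v)) = (1 : K) • T (s, t) (T (i, j) (T (s', t') v)) :=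
    fun s' t' h i j s t his htj => by rw [one_smul]; exact (hTv (s', t') h).r3 i j s t his htj
  have hv3 : ∀ i j s t, i < s → t < j →
      T (i, j) (T (s, t) v) = (1 : K) • T (s, t) (T (i, j) v) :=
    fun i j s t his htj => by rw [one_smul]; exact hv.r3 i j s t his htj
  dsimp only [idxLt] at hpr hrm
  unfold StraightenRel
  rcases lt_trichotomy b d with h1 | h1 | h1 <;>
  rcases lt_trichotomy b f with h2 | h2 | h2 <;>
  rcases lt_trichotomy d f with h3 | h3 | h3 <;>
  rcases hpr with h4 | ⟨h4, h4'⟩ <;> rcases hrm with h5 | ⟨h5, h5'⟩ <;>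
  first
  | (exfalso; omega)
  | (subst_vars
     simp (disch := omega) only [swapCoeff, crossCoeff, if_pos, if_neg, true_or, or_true,
       if_true, zero_smul, add_zero, one_smul]
     try simp (disch := omega) only [hv.r1, hv.r2, hv3, hv.r4, r1, r2, r3, r4, map_add, map_smul]
     all_goals match_scalars <;> (try field_simp) <;> ring1)

end Relations

abbrev Monomials (K : Type*) [Zero K] (n : ℕ) := (Fin n × Fin n → ℕ) →₀ K

open Classical in
/-- The normal form of `z_x z^α`. -/
def straightenBasis (q : K) (x : Fin n × Fin n) (α : Fin n × Fin n → ℕ) : Monomials K n :=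
  if h : LettersLE x α then Finsupp.single (α + Pi.single x 1) 1
  else
    let m := topLetter α (ne_zero_of_not_lettersLE h)
    let β := α - Pi.single m 1
    swapCoeff q x m • Finsupp.linearCombination K (straightenBasis q m) (straightenBasis q x β) +
      if x.1 < m.1 ∧ x.2 < m.2 then
        (q - q⁻¹) • Finsupp.linearCombination K (straightenBasis q (x.1, m.2))
          (straightenBasis q (m.1, x.2) β)
      else 0
termination_by (n * n - key x, totalWeight α)
decreasing_by
  · exact Prod.Lex.left _ _ (sub_key_lt_sub_key (idxLt_topLetter h))
  · exact Prod.Lex.right _ (totalWeight_sub_single_lt (topLetter_spec _).1)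
  all_goals rename_i hc
  · exact Prod.Lex.left _ _ (sub_key_lt_sub_key (Or.inr ⟨rfl, hc.2⟩))
  · exact Prod.Lex.left _ _ (sub_key_lt_sub_key (Or.inl hc.1))

def straighten (q : K) (x : Fin n × Fin n) : Monomials K n →ₗ[K] Monomials K n :=
  Finsupp.linearCombination K (straightenBasis q x)

variable {q : K}

lemma straighten_single (x : Fin n × Fin n) (α : Fin n × Fin n → ℕ) :
    straighten q x (Finsupp.single α 1) = straightenBasis q x α := by
  simp [straighten]

lemma straighten_single_of_lettersLE {x : Fin n × Fin n} {α : Fin n × Fin n → ℕ}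
    (h : LettersLE x α) :
    straighten q x (Finsupp.single α 1) = Finsupp.single (α + Pi.single x 1) 1 := by
  rw [straighten_single, straightenBasis, dif_pos h]

lemma straighten_single_add_single {x m : Fin n × Fin n} {α : Fin n × Fin n → ℕ}
    (hm : LettersLE m α) (hx : idxLt x m) :
    straighten q x (Finsupp.single (α + Pi.single m 1) 1) =
      swapCoeff q x m • straighten q m (straighten q x (Finsupp.single α 1)) +
        crossCoeff q x m •
          straighten q (x.1, m.2) (straighten q (m.1, x.2) (Finsupp.single α 1)) := by
  have hx' : ¬ LettersLE x (α + Pi.single m 1) := fun h => h m (by simp) hx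
  rw [straighten_single, straightenBasis, dif_neg hx']
  simp only [topLetter_add_single hm, add_tsub_cancel_right, ← straighten_single]
  by_cases hc : x.1 < m.1 ∧ x.2 < m.2 <;> simp [crossCoeff, hc, straighten]

lemma straightenRel_single_of_lettersLE {x m : Fin n × Fin n} {α : Fin n × Fin n → ℕ}
    (hm : LettersLE m α) (hx : idxLt x m) :
    StraightenRel q (straighten q) x m (Finsupp.single α 1) := by
  rw [StraightenRel, straighten_single_of_lettersLE hm, straighten_single_add_single hm hx]

theorem straighten_induction {P : Fin n × Fin n → (Fin n × Fin n → ℕ) → Prop}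
    (lettersLE : ∀ x α, LettersLE x α → P x α)
    (add_single : ∀ x m α, LettersLE m α → idxLt x m → (∀ y, idxLt x y → ∀ β, P y β) →
      P x α → P x (α + Pi.single m 1))
    (x : Fin n × Fin n) (α : Fin n × Fin n → ℕ) : P x α := by
  induction hN : n * n - key x using Nat.strong_induction_on generalizing x α with
  | _ N ih =>
  have hgt : ∀ y, idxLt x y → ∀ β, P y β := fun y hy β =>
    ih _ (hN ▸ sub_key_lt_sub_key hy) y β rfl
  induction α using exponent_induction with
  | zero => exact lettersLE x 0 fun r hr => absurd rfl hr
  | add_single m α hm hα =>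
    by_cases hx : LettersLE x (α + Pi.single m 1)
    · exact lettersLE x _ hx
    · exact add_single x m α hm (idxLt_of_not_lettersLE hm hx) hgt hα

def lowWeight (K : Type*) [Field K] (n N : ℕ) : Submodule K (Monomials K n) :=
  Finsupp.supported K K {β | totalWeight β ≤ N}

lemma single_mem_lowWeight {N : ℕ} {α : Fin n × Fin n → ℕ} (h : totalWeight α ≤ N) (c : K) :
    Finsupp.single α c ∈ lowWeight K n N :=
  Finsupp.single_mem_supported K c h

lemma lowWeight_mono {N M : ℕ} (h : N ≤ M) : lowWeight K n N ≤ lowWeight K n M :=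
  Finsupp.supported_mono fun _ hβ => le_trans hβ h

lemma lowWeight_eq_span (N : ℕ) :
    lowWeight K n N =
      Submodule.span K ((fun α => Finsupp.single α 1) '' {β | totalWeight β ≤ N}) :=
  Finsupp.supported_eq_span_single K _

lemma map_mem_lowWeight {f : Monomials K n →ₗ[K] Monomials K n} {c : ℕ}
    (hf : ∀ β, f (Finsupp.single β 1) ∈ lowWeight K n (c + totalWeight β)) {N : ℕ}
    {v : Monomials K n} (hv : v ∈ lowWeight K n N) : f v ∈ lowWeight K n (c + N) := by
  have : lowWeight K n N ≤ (lowWeight K n (c + N)).comap f := by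
    rw [lowWeight_eq_span, Submodule.span_le]
    rintro _ ⟨β, hβ, rfl⟩
    exact lowWeight_mono (Nat.add_le_add_left hβ c) (hf β)
  exact this hv

lemma straighten_single_mem_lowWeight (x : Fin n × Fin n) (α : Fin n × Fin n → ℕ) :
    straighten q x (Finsupp.single α 1) ∈ lowWeight K n (weight x + totalWeight α) := by
  induction x, α using straighten_induction with
  | lettersLE x α h =>
    rw [straighten_single_of_lettersLE h]
    exact single_mem_lowWeight (by rw [totalWeight_add_single, add_comm]) 1
  | add_single x m α hm hxm hgt hx =>
    rw [straighten_single_add_single hm hxm, totalWeight_add_single]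
    refine add_mem (Submodule.smul_mem _ _ ?_) ?_
    · exact lowWeight_mono (by omega) (map_mem_lowWeight (hgt m hxm) hx)
    · by_cases hc : x.1 < m.1 ∧ x.2 < m.2
      · have h := map_mem_lowWeight (hgt (x.1, m.2) (Or.inr ⟨rfl, hc.2⟩))
          (hgt (m.1, x.2) (Or.inl hc.1) α)
        have hw := weight_add_weight_lt (a := (x.1, m.2)) (b := (m.1, x.2)) (c := m)
          (Or.inl hc.1) (Or.inr ⟨rfl, hc.2⟩)
        exact Submodule.smul_mem _ _ (lowWeight_mono (by omega) h)
      · simp [crossCoeff, hc]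

lemma straighten_mem_lowWeight {N : ℕ} {v : Monomials K n} (hv : v ∈ lowWeight K n N)
    (x : Fin n × Fin n) : straighten q x v ∈ lowWeight K n (weight x + N) :=
  map_mem_lowWeight (straighten_single_mem_lowWeight x) hv

theorem straightenRel_of_mem_lowWeight (hq : q ≠ 0) (N : ℕ) :
    ∀ v ∈ lowWeight K n N, ∀ x y, idxLt x y → StraightenRel q (straighten q) x y v := by
  induction N using Nat.strong_induction_on with
  | _ N ih =>
  intro v hv x y hxy
  rw [lowWeight_eq_span] at hv
  refine StraightenRel.of_mem_span ?_ hv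
  rintro _ ⟨α, hα, rfl⟩
  dsimp only
  by_cases hy : LettersLE y α
  · exact straightenRel_single_of_lettersLE hy hxy
  obtain ⟨hm0, hm⟩ := topLetter_spec (ne_zero_of_not_lettersLE hy)
  set m := topLetter α (ne_zero_of_not_lettersLE hy)
  have hN : totalWeight (α - Pi.single m 1) + weight m ≤ N := by
    rwa [← totalWeight_add_single, sub_single_add_single hm0]
  have hwm := weight_pos m
  rw [← sub_single_add_single hm0, ← straighten_single_of_lettersLE hm.sub_single]
  refine StraightenRel.of_overlap hq
    (relationsHoldAt_iff.2 (ih _ (by omega) _ (single_mem_lowWeight le_rfl 1))) ?_ hxy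
    (idxLt_topLetter hy)
  intro z hz
  have hwz := weight_lt_weight hz
  exact relationsHoldAt_iff.2 (ih _ (by omega) _
    (straighten_mem_lowWeight (single_mem_lowWeight le_rfl 1) z))

theorem relationsHoldAt_straighten (hq : q ≠ 0) (v : Monomials K n) :
    RelationsHoldAt q (straighten q) v :=
  relationsHoldAt_iff.2 <| straightenRel_of_mem_lowWeight hq (v.support.sup totalWeight) v
    ((Finsupp.mem_supported K v).2 fun _ hβ => Finset.le_sup (f := totalWeight) hβ)

theorem relationsHoldAt_mulLeft (f : QuantumMatrix K q n) :
    RelationsHoldAt q (fun x => LinearMap.mulLeft K (Zgen K q n x.1 x.2)) f := by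
  have rel {a b} (h : QMRel K q n a b) :
      RingQuot.mkAlgHom K (QMRel K q n) a * f = RingQuot.mkAlgHom K (QMRel K q n) b * f := by
    rw [RingQuot.mkAlgHom_rel K h]
  refine ⟨fun i j k h => ?_, fun i j k h => ?_, fun i j s t h1 h2 => ?_,
    fun i j s t h1 h2 => ?_⟩
  · simpa [Zgen, mul_assoc] using rel (.r1 i j k h)
  · simpa [Zgen, mul_assoc] using rel (.r2 i j k h)
  · simpa [Zgen, mul_assoc] using rel (.r3 i j s t h1 h2)
  · simpa [Zgen, mul_assoc, add_mul] using rel (.r4 i j s t h1 h2)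

def straightenRep (hq : q ≠ 0) : QuantumMatrix K q n →ₐ[K] Module.End K (Monomials K n) :=
  RingQuot.liftAlgHom K ⟨FreeAlgebra.lift K (straighten q), fun a b h => by
    refine LinearMap.ext fun v => ?_
    have H := relationsHoldAt_straighten hq v
    cases h with
    | r1 i j k h => simpa [freeGen] using H.r1 i j k h
    | r2 i j k h => simpa [freeGen] using H.r2 i j k h
    | r3 i j s t h1 h2 => simpa [freeGen] using H.r3 i j s t h1 h2
    | r4 i j s t h1 h2 => simpa [freeGen] using H.r4 i j s t h1 h2⟩

lemma straightenRep_Zgen (hq : q ≠ 0) (i j : Fin n) :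
    straightenRep hq (Zgen K q n i j) = straighten q (i, j) := by
  simp [straightenRep, Zgen, freeGen]

lemma prod_map_pow_add_single {M ι : Type*} [Monoid M] [DecidableEq ι] (g : ι → M)
    {L₁ L₂ : List ι} {m : ι} {α : ι → ℕ} (h₁ : ∀ x ∈ L₁, α x = 0 ∧ x ≠ m) (h₂ : m ∉ L₂) :
    ((L₁ ++ m :: L₂).map fun x => g x ^ (α + Pi.single m 1 : ι → ℕ) x).prod =
      g m * ((L₁ ++ m :: L₂).map fun x => g x ^ α x).prod := by
  have hL₁ : ∀ β : ι → ℕ, (∀ x ∈ L₁, β x = 0) → (L₁.map fun x => g x ^ β x).prod = 1 :=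
    fun β hβ => List.prod_eq_one (by simp +contextual [hβ])
  have hL₂ : (L₂.map fun x => g x ^ (α + Pi.single m 1 : ι → ℕ) x) =
      L₂.map fun x => g x ^ α x :=
    List.map_congr_left fun x hx => by
      rw [Pi.add_apply, Pi.single_eq_of_ne (ne_of_mem_of_not_mem hx h₂), add_zero]
  rw [List.map_append, List.map_append, List.prod_append, List.prod_append,
    hL₁ _ fun x hx => by simp [(h₁ x hx).1, (h₁ x hx).2],
    hL₁ _ fun x hx => (h₁ x hx).1, List.map_cons, List.map_cons, List.prod_cons,
    List.prod_cons, hL₂]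
  simp [pow_succ', mul_assoc]

variable (n) in
def indexList : List (Fin n × Fin n) :=
  (List.finRange n).reverse.flatMap fun i => (List.finRange n).reverse.map fun j => (i, j)

lemma zmon_eq_prod (α : Fin n × Fin n → ℕ) :
    zmon K q α = ((indexList n).map fun x => Zgen K q n x.1 x.2 ^ α x).prod := by
  simp only [zmon, indexList, List.map_flatMap, List.map_map]
  rfl

lemma mem_indexList (p : Fin n × Fin n) : p ∈ indexList n := by
  simp [indexList]

lemma pairwise_indexList : (indexList n).Pairwise fun a b => idxLt b a := by
  simp only [indexList, List.pairwise_flatMap, List.pairwise_map, List.pairwise_reverse,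
    List.mem_map]
  refine ⟨fun i _ => (List.pairwise_lt_finRange n).imp fun h => Or.inr ⟨rfl, h⟩,
    (List.pairwise_lt_finRange n).imp ?_⟩
  rintro a b h _ ⟨_, -, rfl⟩ _ ⟨_, -, rfl⟩
  exact Or.inl h

lemma zmon_zero : zmon K q (0 : Fin n × Fin n → ℕ) = 1 := by
  simp [zmon_eq_prod]

lemma zmon_add_single {m : Fin n × Fin n} {α : Fin n × Fin n → ℕ} (h : LettersLE m α) :
    zmon K q (α + Pi.single m 1) = Zgen K q n m.1 m.2 * zmon K q α := by
  obtain ⟨L₁, L₂, hL⟩ := List.append_of_mem (mem_indexList m)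
  have hsort := pairwise_indexList (n := n)
  rw [hL, List.pairwise_append, List.pairwise_cons] at hsort
  rw [zmon_eq_prod, zmon_eq_prod, hL]
  refine prod_map_pow_add_single _ (fun x hx => ?_) fun hm => ?_
  · have hmx := hsort.2.2 x hx m List.mem_cons_self
    exact ⟨by by_contra h0; exact h x h0 hmx, fun he => idxLt_irrefl m (he ▸ hmx)⟩
  · exact idxLt_irrefl m (hsort.2.1.1 m hm)

variable (q) in
def ofMonomials : Monomials K n →ₗ[K] QuantumMatrix K q n :=
  Finsupp.linearCombination K (zmon K q)

lemma ofMonomials_single (α : Fin n × Fin n → ℕ) :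
    ofMonomials q (Finsupp.single α (1 : K)) = zmon K q α := by
  simp [ofMonomials]

lemma ofMonomials_straighten_of_single {x : Fin n × Fin n}
    (h : ∀ α, ofMonomials q (straighten q x (Finsupp.single α 1)) =
      Zgen K q n x.1 x.2 * zmon K q α) (v : Monomials K n) :
    ofMonomials q (straighten q x v) = Zgen K q n x.1 x.2 * ofMonomials q v := by
  suffices H : ofMonomials q ∘ₗ straighten q x =
      LinearMap.mulLeft K (Zgen K q n x.1 x.2) ∘ₗ ofMonomials q from
    LinearMap.congr_fun H v
  exact Finsupp.lhom_ext' fun α => LinearMap.ext_ring (by simpa [ofMonomials_single] using h α)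

lemma ofMonomials_straighten_single (x : Fin n × Fin n) (α : Fin n × Fin n → ℕ) :
    ofMonomials q (straighten q x (Finsupp.single α 1)) = Zgen K q n x.1 x.2 * zmon K q α := by
  induction x, α using straighten_induction with
  | lettersLE x α h =>
    rw [straighten_single_of_lettersLE h, ofMonomials_single, zmon_add_single h]
  | add_single x m α hm hxm hgt hx =>
    have hz := relationsHoldAt_iff.1 (relationsHoldAt_mulLeft (zmon K q α)) x m hxm
    simp only [StraightenRel, LinearMap.mulLeft_apply] at hz
    rw [straighten_single_add_single hm hxm, zmon_add_single hm, hz, map_add, map_smul,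
      map_smul, ofMonomials_straighten_of_single (hgt m hxm), hx]
    by_cases hc : x.1 < m.1 ∧ x.2 < m.2
    · rw [ofMonomials_straighten_of_single (hgt (x.1, m.2) (Or.inr ⟨rfl, hc.2⟩)),
        hgt (m.1, x.2) (Or.inl hc.1)]
    · simp [crossCoeff, hc]

lemma ofMonomials_straighten (x : Fin n × Fin n) (v : Monomials K n) :
    ofMonomials q (straighten q x v) = Zgen K q n x.1 x.2 * ofMonomials q v :=
  ofMonomials_straighten_of_single (ofMonomials_straighten_single x) v

lemma ofMonomials_straightenRep (hq : q ≠ 0) (f : QuantumMatrix K q n) (v : Monomials K n) :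
    ofMonomials q (straightenRep hq f v) = f * ofMonomials q v := by
  obtain ⟨a, rfl⟩ := RingQuot.mkAlgHom_surjective K (QMRel K q n) f
  induction a using FreeAlgebra.induction generalizing v with
  | grade0 c => simp [Algebra.smul_def]
  | grade1 x =>
    exact (congrArg (ofMonomials q) (LinearMap.congr_fun (straightenRep_Zgen hq x.1 x.2) v)).trans
      (ofMonomials_straighten x v)
  | mul a b ha hb => simp [ha, hb, mul_assoc]
  | add a b ha hb => simp [ha, hb, add_mul]

variable (q) in
def toMonomials (hq : q ≠ 0) : QuantumMatrix K q n →ₗ[K] Monomials K n :=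
  LinearMap.applyₗ (Finsupp.single 0 1) ∘ₗ (straightenRep hq).toLinearMap

lemma toMonomials_apply (hq : q ≠ 0) (f : QuantumMatrix K q n) :
    toMonomials q hq f = straightenRep hq f (Finsupp.single 0 1) := rfl

lemma toMonomials_zmon (hq : q ≠ 0) (α : Fin n × Fin n → ℕ) :
    toMonomials q hq (zmon K q α) = Finsupp.single α 1 := by
  induction α using exponent_induction with
  | zero => simp [toMonomials_apply, zmon_zero]
  | add_single m α hm ih =>
    rw [toMonomials_apply, zmon_add_single hm, map_mul, Module.End.mul_apply,
      ← toMonomials_apply, ih, straightenRep_Zgen, straighten_single_of_lettersLE hm]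

variable (q) in
def pbwBasis (hq : q ≠ 0) : Module.Basis (Fin n × Fin n → ℕ) K (QuantumMatrix K q n) :=
  .ofRepr <| .ofLinearMap (toMonomials q hq) (ofMonomials q)
    (Finsupp.lhom_ext' fun α => LinearMap.ext_ring <| by
      simp [ofMonomials_single, toMonomials_zmon])
    (LinearMap.ext fun f => by
      simp [toMonomials_apply, ofMonomials_straightenRep, ofMonomials_single, zmon_zero])

lemma coe_pbwBasis (hq : q ≠ 0) : ⇑(pbwBasis q hq) = zmon K q (n := n) := by
  ext α
  simp [pbwBasis, ofMonomials_single]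

end QuantumMatrix

end

theorem quantumMatrix_pbw_basis_general (K : Type*) [Field K]
    (q : K) (hq : q ≠ 0) (n : ℕ) :
    LinearIndependent K (zmon K q (n := n)) ∧
    Submodule.span K (Set.range (zmon K q (n := n))) = ⊤ := by
  rw [← QuantumMatrix.coe_pbwBasis hq]
  exact ⟨(QuantumMatrix.pbwBasis q hq).linearIndependent, (QuantumMatrix.pbwBasis q hq).span_eq⟩

/-- For `n ≥ 2` and `q ≠ 0`, the ordered monomials
`{z^α : α ∈ ℕ^{I(n)}}` form a `K`-basis of `M_q(n)`: they are `K`-linearly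
independent and span `M_q(n)` as a `K`-vector space. -/
theorem quantumMatrix_pbw_basis (K : Type*) [Field K] [CharZero K]
    (q : K) (hq : q ≠ 0) (n : ℕ) (hn : 2 ≤ n) :
    LinearIndependent K (zmon K q (n := n)) ∧
    Submodule.span K (Set.range (zmon K q (n := n))) = ⊤ :=
  quantumMatrix_pbw_basis_general K q hq n
end

section
/- Let M_q(n) be the standard quantized matrix algebra over K with n ≥ 2 and q ≠ 0, and assume the ordered monomials {z^α : α ∈ ℕ^{I(n)}} form a K-basis of M_q(n). For all generators z_{ij}, z_{st}, z_{pq} with z_{st} ≺ z_{pq} in the generator order (i.e., (s,t) < (p,q) in I(n)), the leading exponents satisfy LE(z_{ij} z_{st}) ≺ LE(z_{ij} z_{pq}) and LE(z_{st} z_{ij}) ≺ LE(z_{pq} z_{ij}). -/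
/-! Rewriting `z_a z_c` by at most one of the relations R1–R4 shows that it is a nonzero multiple
of the ordered monomial `z^(ε_a + ε_c)`, plus, in case R4 (`a = (i,j)`, `c = (s,t)`, `i < s`,
`j < t`), a multiple of `z_{it} z_{sj}`, whose exponent is lexicographically smaller. Hence
`LE(z_a z_c) = ε_a + ε_c`, and the claim follows because `≺` is compatible with addition and
`ε_{st} ≺ ε_{pr}`. -/

namespace List

variable {ι : Type*} {l : List ι}

theorem Pairwise.pair_sublist {R : ι → ι → Prop} (hR : ∀ x y, R x y → ¬ R y x)
    (hl : l.Pairwise R) {a c : ι} (ha : a ∈ l) (hc : c ∈ l) (hac : R a c) : [a, c] <+ l := by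
  obtain ⟨r₁, r₂, rfl⟩ := append_of_mem ha
  have hc₂ : c ∈ r₂ := by
    rcases mem_append.1 hc with hc₁ | hc₂
    · exact absurd ((pairwise_append.1 hl).2.2 c hc₁ a mem_cons_self) (hR a c hac)
    · rcases mem_cons.1 hc₂ with hca | hc₂
      · subst hca
        exact absurd hac (hR c c hac)
      · exact hc₂
  exact ((singleton_sublist.2 hc₂).cons_cons a).trans (sublist_append_right r₁ _)

variable {M : Type*} [Monoid M] [DecidableEq ι]

theorem prod_map_pow_eq_pow_of_nodup (hl : l.Nodup) {a : ι} (ha : a ∈ l) (f : ι → M)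
    {e : ι → ℕ} (he : ∀ p ∈ l, p ≠ a → e p = 0) :
    (l.map fun p => f p ^ e p).prod = f a ^ e a := by
  rw [prod_map_eq_pow_single a _ fun p hpa hp => by rw [he p hp hpa, pow_zero],
    count_eq_one_of_mem hl ha, pow_one]

theorem prod_map_pow_eq_mul_of_nodup (hl : l.Nodup) {a c : ι} (hac : [a, c] <+ l) (f : ι → M)
    {e : ι → ℕ} (he : ∀ p ∈ l, p ≠ a → p ≠ c → e p = 0) :
    (l.map fun p => f p ^ e p).prod = f a ^ e a * f c ^ e c := by
  obtain ⟨r₁, r₂, rfl, ha, hc⟩ := cons_sublist_iff.1 hac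
  have hc : c ∈ r₂ := singleton_sublist.1 hc
  have hdisj := disjoint_of_nodup_append hl
  rw [map_append, prod_append,
    prod_map_pow_eq_pow_of_nodup hl.of_append_left ha f fun p hp hpa =>
      he p (mem_append_left _ hp) hpa fun hpc => hdisj hp (hpc ▸ hc),
    prod_map_pow_eq_pow_of_nodup hl.of_append_right hc f fun p hp hpc =>
      he p (mem_append_right _ hp) (fun hpa => hdisj (hpa ▸ ha) hp) hpc]

end List

section IndexOrder

variable {n : ℕ}

theorem idxLt_iff_toLex_lt {a c : Fin n × Fin n} : idxLt a c ↔ toLex a < toLex c :=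
  Prod.Lex.toLex_lt_toLex.symm

theorem ne_of_idxLt {a c : Fin n × Fin n} (h : idxLt a c) : a ≠ c := by
  rintro rfl
  exact lt_irrefl _ (idxLt_iff_toLex_lt.1 h)

theorem idxLt_asymm {a c : Fin n × Fin n} (h : idxLt a c) : ¬ idxLt c a :=
  fun h' => lt_asymm (idxLt_iff_toLex_lt.1 h) (idxLt_iff_toLex_lt.1 h')

theorem idxLt_trans {a c d : Fin n × Fin n} (h : idxLt a c) (h' : idxLt c d) : idxLt a d :=
  idxLt_iff_toLex_lt.2 ((idxLt_iff_toLex_lt.1 h).trans (idxLt_iff_toLex_lt.1 h'))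

theorem idxLt_trichotomy (a c : Fin n × Fin n) : idxLt a c ∨ a = c ∨ idxLt c a := by
  simpa only [idxLt_iff_toLex_lt, toLex_inj] using lt_trichotomy (toLex a) (toLex c)

theorem eps_apply_of_idxLt {i j : Fin n} {x : Fin n × Fin n} (h : idxLt (i, j) x) :
    eps i j x = 0 :=
  if_neg (ne_of_idxLt h).symm

theorem expLt_asymm {α β : Fin n × Fin n → ℕ} (h : expLt α β) : ¬ expLt β α := by
  rintro ⟨p', hp', hβα⟩
  obtain ⟨p, hp, hαβ⟩ := h
  rcases idxLt_trichotomy p p' with hpp' | rfl | hp'p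
  · exact (hαβ p' hpp').not_gt hp'
  · exact hp.not_gt hp'
  · exact (hβα p hp'p).not_gt hp

theorem expLt_add_left {α β : Fin n × Fin n → ℕ} (γ : Fin n × Fin n → ℕ) (h : expLt α β) :
    expLt (γ + α) (γ + β) := by
  obtain ⟨p, hp, hαβ⟩ := h
  exact ⟨p, by simpa using hp, fun x hx => by simp [hαβ x hx]⟩

theorem expLt_add_right {α β : Fin n × Fin n → ℕ} (γ : Fin n × Fin n → ℕ) (h : expLt α β) :
    expLt (α + γ) (β + γ) := by
  simpa only [add_comm _ γ] using expLt_add_left γ h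

theorem expLt_eps {s t p r : Fin n} (h : idxLt (s, t) (p, r)) : expLt (eps s t) (eps p r) := by
  refine ⟨(p, r), ?_, fun x hx => ?_⟩
  · simp [eps, (ne_of_idxLt h).symm]
  · rw [eps_apply_of_idxLt (idxLt_trans h hx), eps_apply_of_idxLt hx]

theorem expLt_eps_add_eps_swap {i j s t : Fin n} (his : i < s) (hjt : j < t) :
    expLt (eps i t + eps s j) (eps i j + eps s t) := by
  refine ⟨(s, t), ?_, fun x hx => ?_⟩
  · simp [eps, his.ne', hjt.ne']
  · have hit : idxLt (i, t) (s, t) := Or.inl his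
    have hsj : idxLt (s, j) (s, t) := Or.inr ⟨rfl, hjt⟩
    have hij : idxLt (i, j) (s, t) := Or.inl his
    simp only [Pi.add_apply, eps_apply_of_idxLt (idxLt_trans hit hx),
      eps_apply_of_idxLt (idxLt_trans hsj hx), eps_apply_of_idxLt (idxLt_trans hij hx),
      eps_apply_of_idxLt hx]

end IndexOrder

section QuantumMatrix

variable {K : Type*} [Field K] {q : K} {n : ℕ}

theorem Zgen_mul_Zgen_of_lt_col (i : Fin n) {j k : Fin n} (h : j < k) :
    Zgen K q n i j * Zgen K q n i k = q • (Zgen K q n i k * Zgen K q n i j) := by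
  simpa only [Zgen, map_mul, map_smul] using RingQuot.mkAlgHom_rel K (QMRel.r1 (q := q) i j k h)

theorem Zgen_mul_Zgen_of_lt_row {i k : Fin n} (j : Fin n) (h : i < k) :
    Zgen K q n i j * Zgen K q n k j = q • (Zgen K q n k j * Zgen K q n i j) := by
  simpa only [Zgen, map_mul, map_smul] using RingQuot.mkAlgHom_rel K (QMRel.r2 (q := q) i j k h)

theorem Zgen_mul_Zgen_of_lt_of_gt {i j s t : Fin n} (his : i < s) (htj : t < j) :
    Zgen K q n i j * Zgen K q n s t = Zgen K q n s t * Zgen K q n i j := by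
  simpa only [Zgen, map_mul] using RingQuot.mkAlgHom_rel K (QMRel.r3 (q := q) i j s t his htj)

theorem Zgen_mul_Zgen_of_lt_of_lt {i j s t : Fin n} (his : i < s) (hjt : j < t) :
    Zgen K q n i j * Zgen K q n s t =
      Zgen K q n s t * Zgen K q n i j + (q - q⁻¹) • (Zgen K q n i t * Zgen K q n s j) := by
  simpa only [Zgen, map_mul, map_add, map_smul] using
    RingQuot.mkAlgHom_rel K (QMRel.r4 (q := q) i j s t his hjt)

def idxList (n : ℕ) : List (Fin n × Fin n) :=
  (List.finRange n).reverse.flatMap fun i => (List.finRange n).reverse.map fun j => (i, j)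

theorem zmon_eq_prod_idxList (α : Fin n × Fin n → ℕ) :
    zmon K q α = ((idxList n).map fun p => Zgen K q n p.1 p.2 ^ α p).prod := by
  simp only [zmon, idxList, List.map_flatMap, List.map_map]
  rfl

theorem idxList_pairwise : (idxList n).Pairwise fun a c => idxLt c a := by
  rw [idxList, List.pairwise_flatMap, List.pairwise_reverse]
  refine ⟨fun i _ => ?_, (List.pairwise_lt_finRange n).imp ?_⟩
  · rw [List.pairwise_map, List.pairwise_reverse]
    exact (List.pairwise_lt_finRange n).imp fun h => Or.inr ⟨rfl, h⟩
  · intro i i' hii' x hx y hy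
    obtain ⟨j, -, rfl⟩ := List.mem_map.1 hx
    obtain ⟨j', -, rfl⟩ := List.mem_map.1 hy
    exact Or.inl hii'

theorem idxList_nodup : (idxList n).Nodup :=
  idxList_pairwise.imp fun h => (ne_of_idxLt h).symm

theorem mem_idxList (a : Fin n × Fin n) : a ∈ idxList n := by
  simp [idxList]

theorem zmon_eps_add_eps {i j s t : Fin n} (h : ¬ idxLt (i, j) (s, t)) :
    zmon K q (eps i j + eps s t) = Zgen K q n i j * Zgen K q n s t := by
  rw [zmon_eq_prod_idxList]
  rcases idxLt_trichotomy (i, j) (s, t) with hlt | heq | hgt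
  · exact absurd hlt h
  · obtain ⟨rfl, rfl⟩ := Prod.ext_iff.1 heq
    rw [List.prod_map_pow_eq_pow_of_nodup idxList_nodup (mem_idxList (i, j)) _
      fun p _ hp => by simp [eps, hp]]
    simp [eps, pow_two]
  · have hne := ne_of_idxLt hgt
    rw [List.prod_map_pow_eq_mul_of_nodup idxList_nodup
      (idxList_pairwise.pair_sublist (fun _ _ => idxLt_asymm) (mem_idxList (i, j))
        (mem_idxList (s, t)) hgt) _ fun p _ hp hp' => by simp [eps, hp, hp']]
    simp [eps, hne, hne.symm]

end QuantumMatrix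

section LeadingExponent

variable {K : Type*} [Field K] {q : K} {n : ℕ}
  {lt : (Fin n × Fin n → ℕ) → (Fin n × Fin n → ℕ) → Prop}
  {b : Module.Basis (Fin n × Fin n → ℕ) K (QuantumMatrix K q n)} {f : QuantumMatrix K q n}
  {γ : Fin n × Fin n → ℕ}

theorem IsLeadExpWrt.unique (hlt : ∀ α β, lt α β → ¬ lt β α) {γ' : Fin n × Fin n → ℕ}
    (h : IsLeadExpWrt lt b f γ) (h' : IsLeadExpWrt lt b f γ') : γ = γ' := by
  rcases h'.2 γ h.1 with hγ | hγ
  · exact hγ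
  · rcases h.2 γ' h'.1 with hγ' | hγ'
    · exact hγ'.symm
    · exact absurd hγ' (hlt γ γ' hγ)

theorem isLeadExpWrt_basis (γ : Fin n × Fin n → ℕ) : IsLeadExpWrt lt b (b γ) γ := by
  refine ⟨by simp, fun δ hδ => Or.inl ?_⟩
  by_contra hne
  simp [Ne.symm hne] at hδ

theorem IsLeadExpWrt.smul {c : K} (hc : c ≠ 0) (h : IsLeadExpWrt lt b f γ) :
    IsLeadExpWrt lt b (c • f) γ := by
  simp only [IsLeadExpWrt, map_smul, Finsupp.smul_apply, smul_eq_mul, ne_eq, mul_eq_zero,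
    hc, false_or] at h ⊢
  exact h

theorem IsLeadExpWrt.add_smul_basis (h : IsLeadExpWrt lt b f γ)
    (hlt : ∀ α β, lt α β → ¬ lt β α) {δ : Fin n × Fin n → ℕ} (hδ : lt δ γ) (c : K) :
    IsLeadExpWrt lt b (f + c • b δ) γ := by
  have hne : δ ≠ γ := fun e => hlt δ γ hδ (e ▸ hδ)
  refine ⟨by simpa [Finsupp.single_apply, hne] using h.1, fun δ' hδ' => ?_⟩
  by_cases hδ'δ : δ' = δ
  · exact Or.inr (hδ'δ ▸ hδ)
  · exact h.2 δ' (by simpa [Finsupp.single_apply, Ne.symm hδ'δ] using hδ')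

end LeadingExponent

theorem isLeadExp_Zgen_mul_Zgen {K : Type*} [Field K] {q : K} (hq : q ≠ 0) {n : ℕ}
    {b : Module.Basis (Fin n × Fin n → ℕ) K (QuantumMatrix K q n)}
    (hb : ∀ α, b α = zmon K q α) (i j s t : Fin n) :
    IsLeadExp b (Zgen K q n i j * Zgen K q n s t) (eps i j + eps s t) := by
  unfold IsLeadExp
  by_cases hlt : idxLt (i, j) (s, t)
  swap
  · rw [← zmon_eps_add_eps hlt, ← hb]
    exact isLeadExpWrt_basis _
  have hswap : IsLeadExpWrt expLt b (Zgen K q n s t * Zgen K q n i j) (eps i j + eps s t) := by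
    rw [← zmon_eps_add_eps (idxLt_asymm hlt), ← hb, add_comm]
    exact isLeadExpWrt_basis _
  rcases hlt with his | ⟨rfl, hjt⟩
  · rcases lt_trichotomy j t with hjt | rfl | htj
    · have hlower : b (eps i t + eps s j) = Zgen K q n i t * Zgen K q n s j := by
        have hts : idxLt (i, t) (s, j) := Or.inl his
        rw [hb, add_comm (eps i t), zmon_eps_add_eps (idxLt_asymm hts),
          Zgen_mul_Zgen_of_lt_of_gt his hjt]
      rw [Zgen_mul_Zgen_of_lt_of_lt his hjt, ← hlower]
      exact hswap.add_smul_basis (fun _ _ => expLt_asymm) (expLt_eps_add_eps_swap his hjt) _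
    · rw [Zgen_mul_Zgen_of_lt_row j his]
      exact hswap.smul hq
    · rw [Zgen_mul_Zgen_of_lt_of_gt his htj]
      exact hswap
  · rw [Zgen_mul_Zgen_of_lt_col i hjt]
    exact hswap.smul hq

theorem leadExp_gen_mono_general (K : Type*) [Field K]
    (q : K) (hq : q ≠ 0) (n : ℕ)
    (b : Module.Basis (Fin n × Fin n → ℕ) K (QuantumMatrix K q n))
    (hb : ∀ α, b α = zmon K q α)
    (i j s t p r : Fin n) (h : idxLt (s, t) (p, r)) :
    (∀ γ₁ γ₂, IsLeadExp b (Zgen K q n i j * Zgen K q n s t) γ₁ →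
      IsLeadExp b (Zgen K q n i j * Zgen K q n p r) γ₂ → expLt γ₁ γ₂) ∧
    (∀ γ₁ γ₂, IsLeadExp b (Zgen K q n s t * Zgen K q n i j) γ₁ →
      IsLeadExp b (Zgen K q n p r * Zgen K q n i j) γ₂ → expLt γ₁ γ₂) := by
  have hlead := isLeadExp_Zgen_mul_Zgen hq hb
  have hasymm : ∀ α β : Fin n × Fin n → ℕ, expLt α β → ¬ expLt β α := fun _ _ => expLt_asymm
  refine ⟨fun γ₁ γ₂ h₁ h₂ => ?_, fun γ₁ γ₂ h₁ h₂ => ?_⟩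
  · rw [h₁.unique hasymm (hlead i j s t), h₂.unique hasymm (hlead i j p r)]
    exact expLt_add_left _ (expLt_eps h)
  · rw [h₁.unique hasymm (hlead s t i j), h₂.unique hasymm (hlead p r i j)]
    exact expLt_add_right _ (expLt_eps h)

/-- for generators `z_{ij}, z_{st}, z_{pr}` with
`(s,t) < (p,r)`, the leading exponents satisfy
`LE(z_{ij} z_{st}) ≺ LE(z_{ij} z_{pr})` and
`LE(z_{st} z_{ij}) ≺ LE(z_{pr} z_{ij})`. -/
theorem leadExp_gen_mono (K : Type*) [Field K] [CharZero K]
    (q : K) (hq : q ≠ 0) (n : ℕ) (hn : 2 ≤ n)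
    (b : Module.Basis (Fin n × Fin n → ℕ) K (QuantumMatrix K q n))
    (hb : ∀ α, b α = zmon K q α)
    (i j s t p r : Fin n) (h : idxLt (s, t) (p, r)) :
    (∀ γ₁ γ₂, IsLeadExp b (Zgen K q n i j * Zgen K q n s t) γ₁ →
      IsLeadExp b (Zgen K q n i j * Zgen K q n p r) γ₂ → expLt γ₁ γ₂) ∧
    (∀ γ₁ γ₂, IsLeadExp b (Zgen K q n s t * Zgen K q n i j) γ₁ →
      IsLeadExp b (Zgen K q n p r * Zgen K q n i j) γ₂ → expLt γ₁ γ₂) :=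
  leadExp_gen_mono_general K q hq n b hb i j s t p r h
end
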